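/- (Asymptotically flat limit of the Kerr–Vaidya–de Sitter charge.) Let a ≠ 0 and r > 0 be fixed. Then the function H ↦ ((1 + H²·a²)·r·arctan(H·a) − (r² + a²)·H·arctan(a/r)) / (2·(1 + H²·a²)·H·a·(r²·H² − 1)) tends to ((r² + a²)/(2a))·arctan(a/r) − r/2 as H → 0 (limit through values H ≠ 0 with |H| < 1/r). Hence the Kerr–Vaidya–de Sitter Noether charge Q_K̃ = M(ṽ)/Z² − M′(ṽ)·q̃(r) converges to the Kerr–Vaidya Noether charge Q_K = M(v) − M′(v)·(((r² + a²)/(2a))·arctan(a/r) − r/2) as the cosmological constant tends to zero. -/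

import Mathlib

noncomputable section

open Real Filter Topology

/-- The coefficient of `−M′(ṽ)` in the Noether charge of the Kodama-like current of
Kerr–Vaidya–de Sitter spacetime, viewed as a function of the Hubble constant `H`. -/
def qKVdS (H a r : ℝ) : ℝ :=
  ((1 + H ^ 2 * a ^ 2) * r * Real.arctan (H * a)
      - (r ^ 2 + a ^ 2) * H * Real.arctan (a / r))
    / (2 * (1 + H ^ 2 * a ^ 2) * H * a * (r ^ 2 * H ^ 2 - 1))

lemma arctan_slope_tendsto (a : ℝ) :
    Tendsto (fun H : ℝ => Real.arctan (H * a) / H) (𝓝[≠] (0:ℝ)) (𝓝 a) := by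
  have hd : HasDerivAt (fun H : ℝ => Real.arctan (H * a)) a 0 := by
    have h1 : HasDerivAt (fun H : ℝ => H * a) a 0 := by
      simpa using (hasDerivAt_id (0:ℝ)).mul_const a
    have h2 := (Real.hasDerivAt_arctan ((0:ℝ) * a)).comp 0 h1
    simpa [Function.comp_def] using h2
  have := hasDerivAt_iff_tendsto_slope.mp hd
  refine this.congr' ?_
  filter_upwards [self_mem_nhdsWithin] with H hH
  simp [slope_def_field]

/-- Asymptotically flat limit of the Kerr–Vaidya–de Sitter charge: as `H → 0` through values
`H ≠ 0` with `|H| < 1/r`, the coefficient `q̃(r)` tends to the Kerr–Vaidya coefficient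
`((r²+a²)/(2a))·arctan(a/r) − r/2`, so `Q_K̃` converges to `Q_K`. -/
theorem qKVdS_tendsto_flat (a r : ℝ) (ha : a ≠ 0) (hr : 0 < r) :
    Tendsto (fun H : ℝ => qKVdS H a r)
      (𝓝[{H : ℝ | H ≠ 0 ∧ |H| < 1 / r}] 0)
      (𝓝 ((r ^ 2 + a ^ 2) / (2 * a) * Real.arctan (a / r) - r / 2)) := by
  set S : Set ℝ := {H : ℝ | H ≠ 0 ∧ |H| < 1 / r}
  set B := Real.arctan (a / r) with hB
  set g : ℝ → ℝ := fun H =>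
    ((1 + H ^ 2 * a ^ 2) * r * (Real.arctan (H * a) / H) - (r ^ 2 + a ^ 2) * B)
      / (2 * (1 + H ^ 2 * a ^ 2) * a * (r ^ 2 * H ^ 2 - 1)) with hg
  have hsub : S ⊆ {(0:ℝ)}ᶜ := fun H hH => hH.1
  have hle : 𝓝[S] (0:ℝ) ≤ 𝓝[≠] (0:ℝ) := nhdsWithin_mono _ hsub
  -- limit of g
  have hnum : Tendsto (fun H : ℝ =>
      (1 + H ^ 2 * a ^ 2) * r * (Real.arctan (H * a) / H) - (r ^ 2 + a ^ 2) * B)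
      (𝓝[S] (0:ℝ)) (𝓝 (r * a - (r ^ 2 + a ^ 2) * B)) := by
    have h1 : Tendsto (fun H : ℝ => (1 + H ^ 2 * a ^ 2) * r) (𝓝[S] (0:ℝ)) (𝓝 r) := by
      have hc : Continuous (fun H : ℝ => (1 + H ^ 2 * a ^ 2) * r) := by fun_prop
      have := hc.tendsto 0
      norm_num at this
      simpa using this.mono_left nhdsWithin_le_nhds
    have h2 := (arctan_slope_tendsto a).mono_left hle
    have := (h1.mul h2).sub (tendsto_const_nhds (x := (r ^ 2 + a ^ 2) * B)
      (f := 𝓝[S] (0:ℝ)))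
    simpa [mul_comm] using this
  have hden : Tendsto (fun H : ℝ => 2 * (1 + H ^ 2 * a ^ 2) * a * (r ^ 2 * H ^ 2 - 1))
      (𝓝[S] (0:ℝ)) (𝓝 (-(2 * a))) := by
    have hc : Continuous (fun H : ℝ => 2 * (1 + H ^ 2 * a ^ 2) * a * (r ^ 2 * H ^ 2 - 1)) := by
      fun_prop
    have := (hc.tendsto 0).mono_left (nhdsWithin_le_nhds (s := S))
    convert this using 2
    ring
  have hden_ne : -(2 * a) ≠ 0 := by
    simp [ha]
  have hgl : Tendsto g (𝓝[S] (0:ℝ))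
      (𝓝 ((r * a - (r ^ 2 + a ^ 2) * B) / (-(2 * a)))) := hnum.div hden hden_ne
  have hval : (r * a - (r ^ 2 + a ^ 2) * B) / (-(2 * a))
      = (r ^ 2 + a ^ 2) / (2 * a) * B - r / 2 := by
    field_simp
    ring
  rw [← hval]
  refine hgl.congr' ?_
  filter_upwards [self_mem_nhdsWithin] with H hH
  obtain ⟨hH0, hHr⟩ := hH
  have hZ : (0:ℝ) < 1 + H ^ 2 * a ^ 2 := by positivity
  have hrh : r ^ 2 * H ^ 2 - 1 ≠ 0 := by
    have h1 : |H| * r < 1 := by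
      have := (lt_div_iff₀ hr).mp hHr
      linarith
    have h2 : r ^ 2 * H ^ 2 < 1 := by
      have h3 : (|H| * r) ^ 2 < 1 ^ 2 := by
        apply pow_lt_pow_left₀ h1 (by positivity)
        norm_num
      calc r ^ 2 * H ^ 2 = (|H| * r) ^ 2 := by rw [mul_pow, sq_abs]; ring
        _ < 1 := by simpa using h3
    linarith
  show g H = qKVdS H a r
  rw [hg, qKVdS]
  field_simp
  ring
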